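/- There exist constants c₀ > 0 and C > 0 such that the following holds. Let ã, b̃, c, c̃ be positive real numbers satisfying cosh(c̃) = sinh(ã)·sinh(b̃)·cosh(c) + cosh(ã)·cosh(b̃). If max{ã, b̃} < 1/c₀ and c̃ > 4·max{−log(ã) − log(b̃) + c₀, c₀}, then |c̃ − c − log(sinh(ã)) − log(sinh(b̃))| ≤ C·e^{−c̃/10}. -/

import Mathlib

open Real

/-!
Writing `S = sinh ã sinh b̃` and `K = cosh ã cosh b̃`, the hexagon relation reads
`cosh c̃ = S cosh c + K`, i.e. `exp c̃ - S exp c = S exp (-c) + 2K - exp (-c̃)`.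
For small `ã, b̃` we have `S ≤ 1` and `1 ≤ K ≤ 4`, so the right-hand side is bounded,
while `S exp c` is comparable to `exp c̃`. Hence `c̃ - c - log S = log (exp c̃ / (S exp c))`
lies in `[0, 36 exp (-c̃)]`.
-/

namespace Real

lemma cosh_le_exp_of_nonneg {t : ℝ} (ht : 0 ≤ t) : cosh t ≤ exp t := by
  linarith [exp_sub_cosh t, sinh_nonneg_iff.2 ht]

lemma exp_lt_two_of_lt_half {t : ℝ} (ht : t < 1 / 2) : exp t < 2 := by
  rw [← exp_log two_pos, exp_lt_exp]
  linarith [log_two_gt_d9]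

lemma sinh_lt_one_of_lt_half {t : ℝ} (ht : t < 1 / 2) : sinh t < 1 := by
  linarith [sinh_eq t, exp_pos (-t), exp_lt_two_of_lt_half ht]

lemma cosh_lt_two_of_lt_half {t : ℝ} (h0 : 0 ≤ t) (ht : t < 1 / 2) : cosh t < 2 :=
  (cosh_le_exp_of_nonneg h0).trans_lt (exp_lt_two_of_lt_half ht)

lemma log_sub_log_le_sub_div {a b : ℝ} (hb : 0 < b) (ha : 0 < a) :
    log a - log b ≤ (a - b) / b := by
  rw [← log_div ha.ne' hb.ne', sub_div, div_self hb.ne']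
  exact log_le_sub_one_of_pos (div_pos ha hb)

end Real

section CoshRelation

variable {S K x y : ℝ}

lemma exp_sub_mul_exp_of_cosh_eq (h : cosh x = S * cosh y + K) :
    exp x - S * exp y = S * exp (-y) + 2 * K - exp (-x) := by
  linear_combination 2 * h - 2 * cosh_eq x + 2 * S * cosh_eq y

lemma mul_exp_le_exp_of_cosh_eq (h : cosh x = S * cosh y + K) (hS : 0 ≤ S) (hK : 1 ≤ K)
    (hx : 0 ≤ x) : S * exp y ≤ exp x := by
  have hexp : exp (-x) ≤ 1 := exp_le_one_iff.2 (neg_nonpos.2 hx)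
  nlinarith [exp_sub_mul_exp_of_cosh_eq h, exp_pos (-y)]

lemma exp_sub_mul_exp_le_of_cosh_eq (h : cosh x = S * cosh y + K) (hS0 : 0 ≤ S)
    (hS1 : S ≤ 1) (hy : 0 ≤ y) : exp x - S * exp y ≤ 1 + 2 * K := by
  have hexp : exp (-y) ≤ 1 := exp_le_one_iff.2 (neg_nonpos.2 hy)
  nlinarith [exp_sub_mul_exp_of_cosh_eq h, exp_pos (-x)]

lemma exp_le_four_mul_mul_exp_of_cosh_eq (h : cosh x = S * cosh y + K) (hS : 0 ≤ S)
    (hy : 0 ≤ y) (hK : 4 * K ≤ exp x) : exp x ≤ 4 * (S * exp y) := by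
  have hx : exp x ≤ 2 * cosh x := by linarith [cosh_eq x, exp_pos (-x)]
  nlinarith [cosh_le_exp_of_nonneg hy]

theorem abs_sub_sub_log_le_of_cosh_eq (h : cosh x = S * cosh y + K) (hS0 : 0 < S)
    (hS1 : S ≤ 1) (hK1 : 1 ≤ K) (hK4 : K ≤ 4) (hy : 0 ≤ y) (hx : 16 ≤ exp x) :
    |x - y - log S| ≤ 36 * exp (-x) := by
  have hx0 : 0 ≤ x := one_le_exp_iff.1 (by linarith)
  have hb : 0 < S * exp y := mul_pos hS0 (exp_pos y)
  have hlog : x - y - log S = log (exp x) - log (S * exp y) := by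
    rw [log_exp, log_mul hS0.ne' (exp_pos y).ne', log_exp]
    ring
  have hlower : log (S * exp y) ≤ log (exp x) :=
    log_le_log hb (mul_exp_le_exp_of_cosh_eq h hS0.le hK1 hx0)
  rw [hlog, abs_of_nonneg (sub_nonneg.2 hlower)]
  calc log (exp x) - log (S * exp y) ≤ (exp x - S * exp y) / (S * exp y) :=
        log_sub_log_le_sub_div hb (exp_pos x)
    _ ≤ 9 / (exp x / 4) := by
        gcongr
        · linarith [exp_sub_mul_exp_le_of_cosh_eq h hS0.le hS1 hy]
        · linarith [exp_le_four_mul_mul_exp_of_cosh_eq h hS0.le hy (by linarith)]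
    _ = 36 * exp (-x) := by
        rw [exp_neg]
        field_simp
        norm_num

end CoshRelation

theorem stmt_3 :
    ∃ c₀ > (0 : ℝ), ∃ C > (0 : ℝ),
      ∀ ta tb c tc : ℝ, 0 < ta → 0 < tb → 0 < c → 0 < tc →
        Real.cosh tc = Real.sinh ta * Real.sinh tb * Real.cosh c
            + Real.cosh ta * Real.cosh tb →
        max ta tb < 1 / c₀ →
        tc > 4 * max (-Real.log ta - Real.log tb + c₀) c₀ →
        |tc - c - Real.log (Real.sinh ta) - Real.log (Real.sinh tb)|
          ≤ C * Real.exp (-tc / 10) := by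
  refine ⟨2, two_pos, 36, by norm_num, ?_⟩
  intro ta tb c tc hta htb hc htc hcosh hsmall hlarge
  obtain ⟨hta2, htb2⟩ : ta < 1 / 2 ∧ tb < 1 / 2 := by simpa using hsmall
  have htc8 : 8 < tc := by linarith [le_max_right (-log ta - log tb + 2) 2]
  have hsa := sinh_pos_iff.2 hta
  have hsb := sinh_pos_iff.2 htb
  have hK1 : 1 ≤ cosh ta * cosh tb :=
    one_le_mul_of_one_le_of_one_le (one_le_cosh ta) (one_le_cosh tb)
  have hK4 : cosh ta * cosh tb ≤ 4 := by
    nlinarith [cosh_lt_two_of_lt_half hta.le hta2, cosh_lt_two_of_lt_half htb.le htb2, cosh_pos ta]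
  have hS1 : sinh ta * sinh tb ≤ 1 :=
    mul_le_one₀ (sinh_lt_one_of_lt_half hta2).le hsb.le (sinh_lt_one_of_lt_half htb2).le
  have hexp : 16 ≤ exp tc := by nlinarith [quadratic_le_exp_of_nonneg htc.le]
  rw [sub_sub _ (log _), ← log_mul hsa.ne' hsb.ne']
  calc _ ≤ 36 * exp (-tc) :=
        abs_sub_sub_log_le_of_cosh_eq hcosh (mul_pos hsa hsb) hS1 hK1 hK4 hc.le hexp
    _ ≤ 36 * exp (-tc / 10) := by gcongr; linarith
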